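/- arXiv:2006.11094 — 3 statements merged into one kernel-verified Lean document; each statement's English description precedes it below -/
import Mathlib

section
/- For fixed symmetric positive definite matrices S_YY ∈ R^{p×p}, S_XX ∈ R^{q×q} and any S_YX ∈ R^{p×q}, the function g(Λ, Θ) = -c·ln det(Λ) + ⟨Λ, S_YY⟩ + 2⟨Θ, S_YX⟩ + ⟨ΘΛ^{-1}Θ^T, S_XX⟩, defined on (Λ, Θ) with Λ symmetric positive definite and c > 0, is jointly convex in (Λ, Θ). -/
open Matrix

/-- The trace inner product `⟨A, B⟩ = tr(AᵀB)` on matrices. -/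
noncomputable def traceInner {m n : Type*} [Fintype m] [Fintype n]
    (A B : Matrix m n ℝ) : ℝ := (Aᵀ * B).trace

/-! Convexity is obtained term by term. `-log det` lies above its tangent planes: for positive
definite `A, B`, `log det (B⁻¹A) ≤ tr (B⁻¹A) - n` is `log x ≤ x - 1` on the eigenvalues of the
congruent matrix `√(B⁻¹) A √(B⁻¹)`. For `S ⪰ 0`, completing the square gives
`tr (ΘΛ⁻¹Θᵀ S) = max_Y tr ((YΘᵀ + ΘYᵀ - YΛYᵀ) S)`, a maximum of functions linear in `(Λ, Θ)`,
attained at `Y = ΘΛ⁻¹`. A function that is touched at every point by a convex minorant is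
convex. -/

section Minorant

variable {𝕜 E β : Type*} [Semiring 𝕜] [PartialOrder 𝕜] [AddCommMonoid E] [SMul 𝕜 E]
  [AddCommMonoid β] [PartialOrder β] [IsOrderedAddMonoid β] [Module 𝕜 β] [PosSMulMono 𝕜 β]

theorem convexOn_of_forall_supporting_minorant {s : Set E} {f : E → β} (ℓ : E → E → β)
    (hs : Convex 𝕜 s) (hℓ : ∀ y ∈ s, ConvexOn 𝕜 s (ℓ y))
    (hle : ∀ y ∈ s, ∀ x ∈ s, ℓ y x ≤ f x) (heq : ∀ y ∈ s, ℓ y y = f y) :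
    ConvexOn 𝕜 s f := by
  refine ⟨hs, fun x hx y hy a b ha hb hab => ?_⟩
  have hz := hs hx hy ha hb hab
  calc f (a • x + b • y) = ℓ (a • x + b • y) (a • x + b • y) := (heq _ hz).symm
    _ ≤ a • ℓ (a • x + b • y) x + b • ℓ (a • x + b • y) y := (hℓ _ hz).2 hx hy ha hb hab
    _ ≤ a • f x + b • f y := add_le_add (smul_le_smul_of_nonneg_left (hle _ hz x hx) ha)
        (smul_le_smul_of_nonneg_left (hle _ hz y hy) hb)

end Minorant

namespace Matrix

open scoped MatrixOrder

variable {n m : Type*}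

theorem convex_setOf_posDef : Convex ℝ {A : Matrix n n ℝ | A.PosDef} :=
  convex_iff_forall_pos.2 fun _ hA _ hB _ _ ha hb _ => (hA.smul ha).add (hB.smul hb)

theorem mul_inv_mul_transpose_sub_eq {α : Type*} [CommRing α] [Fintype m] [DecidableEq m]
    {L : Matrix m m α} (hL : L.IsSymm) (hdet : IsUnit L.det) (T Y : Matrix n m α) :
    T * L⁻¹ * Tᵀ - (Y * Tᵀ + T * Yᵀ - Y * L * Yᵀ) = (T * L⁻¹ - Y) * L * (T * L⁻¹ - Y)ᵀ := by
  have hLinv : (L⁻¹)ᵀ = L⁻¹ := by rw [transpose_nonsing_inv, hL.eq]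
  simp only [transpose_sub, transpose_mul, hLinv, Matrix.sub_mul, Matrix.mul_sub]
  simp only [Matrix.mul_assoc, nonsing_inv_mul_cancel_left _ _ hdet,
    mul_nonsing_inv_cancel_left _ _ hdet]
  abel

variable [Fintype n] [Fintype m]

theorem PosSemidef.trace_mul_nonneg [DecidableEq n] {A B : Matrix n n ℝ} (hA : A.PosSemidef)
    (hB : B.PosSemidef) : 0 ≤ (A * B).trace := by
  set R := CFC.sqrt B
  have hR : R.IsHermitian := (CFC.sqrt_nonneg B).posSemidef.isHermitian
  have hRR : R * R = B := CFC.sqrt_mul_sqrt_self B (nonneg_iff_posSemidef.2 hB)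
  calc 0 ≤ (Rᴴ * A * R).trace := (hA.conjTranspose_mul_mul_same R).trace_nonneg
    _ = (A * B).trace := by rw [hR.eq, trace_mul_cycle, hRR, trace_mul_comm]

theorem PosDef.log_det_le_trace_sub_card [DecidableEq n] {A : Matrix n n ℝ} (hA : A.PosDef) :
    Real.log A.det ≤ A.trace - Fintype.card n := by
  simp only [hA.isHermitian.det_eq_prod_eigenvalues, hA.isHermitian.trace_eq_sum_eigenvalues,
    RCLike.ofReal_real_eq_id, id_eq]
  rw [Real.log_prod fun i _ => (hA.eigenvalues_pos i).ne', ← Finset.card_univ,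
    Finset.cast_card, ← Finset.sum_sub_distrib]
  exact Finset.sum_le_sum fun i _ => Real.log_le_sub_one_of_pos (hA.eigenvalues_pos i)

theorem PosDef.log_det_add_log_det_le_trace_mul_sub_card [DecidableEq n] {X A : Matrix n n ℝ}
    (hX : X.PosDef) (hA : A.PosDef) :
    Real.log X.det + Real.log A.det ≤ (X * A).trace - Fintype.card n := by
  set R := CFC.sqrt X
  have hR : R.IsHermitian := (CFC.sqrt_nonneg X).posSemidef.isHermitian
  have hX₀ : 0 ≤ X := nonneg_iff_posSemidef.2 hX.posSemidef
  have hRR : R * R = X := CFC.sqrt_mul_sqrt_self X hX₀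
  have hRunit : IsUnit R := (CFC.isUnit_sqrt_iff X hX₀).2 hX.isUnit
  have hRAR : (R * A * R).PosDef := by
    simpa only [hR.eq] using hA.conjTranspose_mul_mul_same (mulVec_injective_of_isUnit hRunit)
  have hdet : (R * A * R).det = X.det * A.det := by
    rw [det_mul, det_mul, mul_right_comm, ← det_mul, hRR]
  have htr : (R * A * R).trace = (X * A).trace := by
    rw [trace_mul_comm, ← mul_assoc, hRR]
  simpa [hdet, htr, Real.log_mul hX.det_pos.ne' hA.det_pos.ne'] using hRAR.log_det_le_trace_sub_card

theorem convexOn_neg_log_det [DecidableEq n] :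
    ConvexOn ℝ {A : Matrix n n ℝ | A.PosDef} fun A => -Real.log A.det := by
  refine convexOn_of_forall_supporting_minorant
    (fun B A => -Real.log B.det + Fintype.card n - (B⁻¹ * A).trace) convex_setOf_posDef
    (fun B _ => ?_) (fun B hB A hA => ?_) (fun B hB => ?_)
  · exact (convexOn_const _ convex_setOf_posDef).sub
      ((traceLinearMap n ℝ ℝ ∘ₗ LinearMap.mulLeft ℝ B⁻¹).concaveOn convex_setOf_posDef)
  · have := hB.inv.log_det_add_log_det_le_trace_mul_sub_card hA
    rw [det_nonsing_inv, Ring.inverse_eq_inv', Real.log_inv] at this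
    linarith
  · simp [nonsing_inv_mul _ hB.det_pos.ne'.isUnit]

theorem trace_sub_mul_le_trace_mul_inv_mul_transpose_mul [DecidableEq n] [DecidableEq m]
    {S : Matrix n n ℝ} (hS : S.PosSemidef) {L : Matrix m m ℝ} (hL : L.PosDef)
    (T Y : Matrix n m ℝ) :
    ((Y * Tᵀ + T * Yᵀ - Y * L * Yᵀ) * S).trace ≤ (T * L⁻¹ * Tᵀ * S).trace := by
  have hsq : 0 ≤ ((T * L⁻¹ - Y) * L * (T * L⁻¹ - Y)ᵀ * S).trace := by
    simpa only [conjTranspose_eq_transpose_of_trivial] using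
      (hL.posSemidef.mul_mul_conjTranspose_same (T * L⁻¹ - Y)).trace_mul_nonneg hS
  rw [← mul_inv_mul_transpose_sub_eq (isHermitian_iff_isSymm.1 hL.isHermitian)
    hL.det_pos.ne'.isUnit, sub_mul, trace_sub] at hsq
  linarith

theorem convexOn_trace_mul_inv_mul_transpose_mul [DecidableEq n] [DecidableEq m]
    {S : Matrix n n ℝ} (hS : S.PosSemidef) :
    ConvexOn ℝ (Prod.fst ⁻¹' {L : Matrix m m ℝ | L.PosDef})
      fun P : Matrix m m ℝ × Matrix n m ℝ => (P.2 * P.1⁻¹ * P.2ᵀ * S).trace := by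
  have hs : Convex ℝ (Prod.fst ⁻¹' {L : Matrix m m ℝ | L.PosDef}) :=
    convex_setOf_posDef.linear_preimage (LinearMap.fst ℝ _ (Matrix n m ℝ))
  refine convexOn_of_forall_supporting_minorant
    (fun P₀ P => ((P₀.2 * P₀.1⁻¹ * P.2ᵀ + P.2 * (P₀.2 * P₀.1⁻¹)ᵀ
      - P₀.2 * P₀.1⁻¹ * P.1 * (P₀.2 * P₀.1⁻¹)ᵀ) * S).trace) hs
    (fun P₀ _ => ?_) (fun P₀ _ P hP => trace_sub_mul_le_trace_mul_inv_mul_transpose_mul hS hP _ _)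
    (fun P₀ hP₀ => ?_)
  · refine ⟨hs, fun P _ Q _ a b _ _ _ => le_of_eq ?_⟩
    simp only [Prod.fst_add, Prod.snd_add, Prod.smul_fst, Prod.smul_snd, transpose_add,
      transpose_smul, Matrix.mul_add, Matrix.add_mul, Matrix.mul_smul, Matrix.smul_mul,
      Matrix.sub_mul, trace_add, trace_sub, trace_smul, smul_eq_mul]
    ring
  · have := mul_inv_mul_transpose_sub_eq (isHermitian_iff_isSymm.1 hP₀.isHermitian)
      hP₀.det_pos.ne'.isUnit P₀.2 (P₀.2 * P₀.1⁻¹)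
    rw [sub_self, transpose_zero, Matrix.mul_zero, sub_eq_zero] at this
    rw [← this]

end Matrix

theorem cggm_negloglik_jointly_convex_general
    (p q : ℕ) (c : ℝ) (hc : 0 < c)
    (SYY : Matrix (Fin p) (Fin p) ℝ)
    (SXX : Matrix (Fin q) (Fin q) ℝ) (hSXX : SXX.PosDef)
    (SYX : Matrix (Fin p) (Fin q) ℝ) :
    ConvexOn ℝ
      {P : Matrix (Fin p) (Fin p) ℝ × Matrix (Fin q) (Fin p) ℝ |
        P.1.IsSymm ∧ P.1.PosDef}
      (fun P =>
        -c * Real.log P.1.det + traceInner P.1 SYY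
          + 2 * traceInner P.2ᵀ SYX + traceInner (P.2 * P.1⁻¹ * P.2ᵀ) SXX) := by
  have hset : {P : Matrix (Fin p) (Fin p) ℝ × Matrix (Fin q) (Fin p) ℝ | P.1.IsSymm ∧ P.1.PosDef}
      = Prod.fst ⁻¹' {Λ | Λ.PosDef} :=
    Set.ext fun P => and_iff_right_of_imp fun h => isHermitian_iff_isSymm.1 h.isHermitian
  have hlogdet := ((convexOn_neg_log_det (n := Fin p)).comp_linearMap
    (LinearMap.fst ℝ _ (Matrix (Fin q) (Fin p) ℝ))).smul hc.le
  have hfrac : ConvexOn ℝ (Prod.fst ⁻¹' {Λ : Matrix (Fin p) (Fin p) ℝ | Λ.PosDef})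
      fun P : _ × Matrix (Fin q) (Fin p) ℝ => traceInner (P.2 * P.1⁻¹ * P.2ᵀ) SXX :=
    (convexOn_trace_mul_inv_mul_transpose_mul hSXX.posSemidef).congr fun P (hP : P.1.PosDef) => by
      have hsymm := (hP.inv.posSemidef.mul_mul_conjTranspose_same P.2).isHermitian
      rw [conjTranspose_eq_transpose_of_trivial, isHermitian_iff_isSymm] at hsymm
      rw [traceInner, hsymm.eq]
  have hlinear : ConvexOn ℝ (Prod.fst ⁻¹' {Λ : Matrix (Fin p) (Fin p) ℝ | Λ.PosDef})
      fun P : _ × Matrix (Fin q) (Fin p) ℝ => traceInner P.1 SYY + 2 * traceInner P.2ᵀ SYX := by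
    refine ⟨hfrac.1, fun P _ Q _ a b _ _ _ => le_of_eq ?_⟩
    simp only [traceInner, Prod.fst_add, Prod.snd_add, Prod.smul_fst, Prod.smul_snd, transpose_add,
      transpose_smul, Matrix.add_mul, Matrix.smul_mul, trace_add, trace_smul, smul_eq_mul]
    ring
  rw [hset]
  refine ((hlogdet.add hlinear).add hfrac).congr fun P _ => ?_
  simp only [Pi.add_apply, Function.comp_apply, LinearMap.fst_apply, smul_eq_mul]
  ring

/-- For fixed symmetric positive definite `S_YY ∈ ℝ^{p×p}`, `S_XX ∈ ℝ^{q×q}`, any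
`S_YX ∈ ℝ^{p×q}` and `c > 0`, the function
`g(Λ, Θ) = -c·ln det Λ + ⟨Λ, S_YY⟩ + 2⟨Θ, S_YX⟩ + ⟨ΘΛ⁻¹Θᵀ, S_XX⟩`
is jointly convex on `{(Λ, Θ) : Λ symmetric positive definite, Θ ∈ ℝ^{q×p}}`. -/
theorem cggm_negloglik_jointly_convex
    (p q : ℕ) (c : ℝ) (hc : 0 < c)
    (SYY : Matrix (Fin p) (Fin p) ℝ) (hSYYs : SYY.IsSymm) (hSYY : SYY.PosDef)
    (SXX : Matrix (Fin q) (Fin q) ℝ) (hSXXs : SXX.IsSymm) (hSXX : SXX.PosDef)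
    (SYX : Matrix (Fin p) (Fin q) ℝ) :
    ConvexOn ℝ
      {P : Matrix (Fin p) (Fin p) ℝ × Matrix (Fin q) (Fin p) ℝ |
        P.1.IsSymm ∧ P.1.PosDef}
      (fun P =>
        -c * Real.log P.1.det + traceInner P.1 SYY
          + 2 * traceInner P.2ᵀ SYX + traceInner (P.2 * P.1⁻¹ * P.2ᵀ) SXX) :=
  cggm_negloglik_jointly_convex_general p q c hc SYY SXX hSXX SYX
end

section
/- For λ1, λ2 ≥ 0 and x ∈ R^K, the minimizer of t ↦ (1/2)‖t - x‖^2 + λ1‖t‖_1 + λ2‖t‖_2 is obtained by first soft-thresholding each coordinate, s_k = S(x_k, λ1), and then group-shrinking: t*_k = s_k · max(1 - λ2/‖s‖_2, 0), i.e., the proximal operator of λ1‖·‖_1 + λ2‖·‖_2 is the composition of the two proximal operators. -/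
/-!
The point `t*` is certified optimal by a subgradient: soft-thresholding leaves a residual
`x - s = λ₁ g` with `g` a subgradient of `‖·‖₁` at `s`, hence also at the nonnegative multiple
`t* = c s`, and group shrinking leaves `s - t* = λ₂ h` with `h` a subgradient of `‖·‖₂` at `t*`.
So `x - t*` is a subgradient of `λ₁‖·‖₁ + λ₂‖·‖₂` at `t*`, and since the prox objective is
`1`-strongly convex it exceeds its value at `t*` by at least `½‖t - t*‖²`, which gives both
optimality and uniqueness.
-/

open Finset
open scoped RealInnerProductSpace

section Subgradient

variable {E : Type*} [NormedAddCommGroup E] [InnerProductSpace ℝ E]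

def IsSubgradient (f : E → ℝ) (t g : E) : Prop :=
  ∀ u, f t + ⟪g, u - t⟫ ≤ f u

theorem IsSubgradient.smul_add_smul {f φ : E → ℝ} {t g h : E} {a b : ℝ}
    (hg : IsSubgradient f t g) (hh : IsSubgradient φ t h) (ha : 0 ≤ a) (hb : 0 ≤ b) :
    IsSubgradient (fun u => a * f u + b * φ u) t (a • g + b • h) := by
  intro u
  have := mul_le_mul_of_nonneg_left (hg u) ha
  have := mul_le_mul_of_nonneg_left (hh u) hb
  simp only [inner_add_left, real_inner_smul_left]
  linarith

theorem isSubgradient_norm {t h : E} (hh : ‖h‖ ≤ 1) (hht : ⟪h, t⟫ = ‖t‖) :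
    IsSubgradient (‖·‖) t h := by
  intro u
  have : ⟪h, u⟫ ≤ ‖u‖ :=
    calc ⟪h, u⟫ ≤ ‖h‖ * ‖u‖ := real_inner_le_norm h u
      _ ≤ ‖u‖ := mul_le_of_le_one_left (norm_nonneg u) hh
  rw [inner_sub_right, hht]
  linarith

theorem isSubgradient_sum_abs {ι : Type*} [Fintype ι] {t g : EuclideanSpace ℝ ι}
    (hg : ∀ k, |g k| ≤ 1) (hgt : ∀ k, g k * t k = |t k|) :
    IsSubgradient (fun u : EuclideanSpace ℝ ι => ∑ k, |u k|) t g := by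
  intro u
  have hcoord : ∀ k, g k * (u k - t k) ≤ |u k| - |t k| := fun k => by
    have : g k * u k ≤ |u k| :=
      calc g k * u k ≤ |g k| * |u k| := by rw [← abs_mul]; exact le_abs_self _
        _ ≤ |u k| := mul_le_of_le_one_left (abs_nonneg _) (hg k)
    linarith [hgt k]
  have hinner : ⟪g, u - t⟫ = ∑ k, g k * (u k - t k) := by
    simp [PiLp.inner_apply, mul_comm]
  calc ∑ k, |t k| + ⟪g, u - t⟫ = ∑ k, (|t k| + g k * (u k - t k)) := by
        rw [hinner, sum_add_distrib]
    _ ≤ ∑ k, |u k| := sum_le_sum fun k _ => by linarith [hcoord k]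

theorem IsSubgradient.prox_objective_add_le {f : E → ℝ} {x t : E}
    (ht : IsSubgradient f t (x - t)) (u : E) :
    (1 / 2) * ‖t - x‖ ^ 2 + f t + (1 / 2) * ‖u - t‖ ^ 2 ≤ (1 / 2) * ‖u - x‖ ^ 2 + f u := by
  have hsq : ‖u - x‖ ^ 2 = ‖u - t‖ ^ 2 - 2 * ⟪x - t, u - t⟫ + ‖t - x‖ ^ 2 := by
    rw [show u - x = (u - t) - (x - t) by abel, norm_sub_sq_real, real_inner_comm,
      norm_sub_rev x t]
  have := ht u
  linarith

theorem IsSubgradient.prox_objective_unique_min {f : E → ℝ} {x t : E}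
    (ht : IsSubgradient f t (x - t)) :
    (∀ u, (1 / 2) * ‖t - x‖ ^ 2 + f t ≤ (1 / 2) * ‖u - x‖ ^ 2 + f u) ∧
      ∀ u, (∀ v, (1 / 2) * ‖u - x‖ ^ 2 + f u ≤ (1 / 2) * ‖v - x‖ ^ 2 + f v) → u = t := by
  refine ⟨fun u => ?_, fun u hu => ?_⟩
  · linarith [ht.prox_objective_add_le u, sq_nonneg ‖u - t‖]
  · have hle : ‖u - t‖ ^ 2 ≤ 0 := by linarith [ht.prox_objective_add_le u, hu t]
    exact norm_sub_eq_zero_iff.mp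
      (pow_eq_zero_iff two_ne_zero |>.mp (hle.antisymm (sq_nonneg _)))

theorem exists_subgradient_norm_groupShrink {s t : E} {lam : ℝ} (hlam : 0 ≤ lam)
    (ht : t = max (1 - lam / ‖s‖) 0 • s) :
    ∃ h : E, ‖h‖ ≤ 1 ∧ ⟪h, t⟫ = ‖t‖ ∧ s - t = lam • h := by
  rcases le_or_gt ‖s‖ lam with hsmall | hlarge
  · have ht0 : t = 0 := by
      rcases (norm_nonneg s).eq_or_lt with hs0 | hs0
      · rw [ht, norm_eq_zero.mp hs0.symm, smul_zero]
      · rw [ht, max_eq_right (by linarith [(one_le_div hs0).mpr hsmall]), zero_smul]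
    refine ⟨lam⁻¹ • s, ?_, by simp [ht0], ?_⟩
    · rw [norm_smul, Real.norm_eq_abs, abs_inv, abs_of_nonneg hlam]
      exact inv_mul_le_one_of_le₀ hsmall hlam
    · rcases hlam.eq_or_lt with rfl | hpos
      · simp [norm_le_zero_iff.mp hsmall, ht0]
      · rw [ht0, sub_zero, smul_inv_smul₀ hpos.ne']
  · have hs0 : 0 < ‖s‖ := hlam.trans_lt hlarge
    have hc : max (1 - lam / ‖s‖) 0 = 1 - lam / ‖s‖ :=
      max_eq_left (by linarith [(div_lt_one hs0).mpr hlarge])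
    rw [hc] at ht
    refine ⟨‖s‖⁻¹ • s, ?_, ?_, ?_⟩
    · rw [norm_smul, norm_inv, norm_norm, inv_mul_cancel₀ hs0.ne']
    · rw [ht, real_inner_smul_left, real_inner_smul_right, real_inner_self_eq_norm_sq, norm_smul,
        Real.norm_eq_abs, abs_of_nonneg (by linarith [(div_lt_one hs0).mpr hlarge])]
      field_simp
    · rw [ht, sub_smul, one_smul, sub_sub_cancel, smul_smul, div_eq_mul_inv]

end Subgradient

theorem exists_subgradient_abs_softThreshold {x s lam : ℝ} (hlam : 0 ≤ lam)
    (hs : s = Real.sign x * max (|x| - lam) 0) :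
    ∃ g : ℝ, |g| ≤ 1 ∧ g * s = |s| ∧ x - s = lam * g := by
  rcases le_or_gt |x| lam with hsmall | hlarge
  · have hs0 : s = 0 := by rw [hs, max_eq_right (by linarith), mul_zero]
    refine ⟨x / lam, ?_, by simp [hs0], ?_⟩
    · rw [abs_div, abs_of_nonneg hlam]
      exact div_le_one_of_le₀ hsmall hlam
    · rcases hlam.eq_or_lt with rfl | hpos
      · simp [abs_nonpos_iff.mp hsmall, hs0]
      · rw [hs0, sub_zero, mul_div_cancel₀ x hpos.ne']
  · rw [max_eq_left (sub_pos.mpr hlarge).le] at hs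
    rcases lt_trichotomy x 0 with hx | rfl | hx
    · rw [Real.sign_of_neg hx] at hs; rw [abs_of_neg hx] at hs hlarge
      exact ⟨-1, by norm_num, by rw [abs_of_neg (by linarith)]; ring, by rw [hs]; ring⟩
    · rw [abs_zero] at hlarge
      exact absurd hlam hlarge.not_ge
    · rw [Real.sign_of_pos hx] at hs; rw [abs_of_pos hx] at hs hlarge
      exact ⟨1, by norm_num, by rw [abs_of_pos (by linarith)]; ring, by rw [hs]; ring⟩

/-- For `λ₁, λ₂ ≥ 0` and `x ∈ ℝ^K`, the minimizer of
`t ↦ (1/2)‖t - x‖² + λ₁‖t‖₁ + λ₂‖t‖₂` is obtained by first soft-thresholding each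
coordinate, `s k = S(x k, λ₁)`, then group-shrinking `t* k = s k · max(1 - λ₂/‖s‖₂, 0)`:
the proximal operator of `λ₁‖·‖₁ + λ₂‖·‖₂` is the composition of the two proximal
operators (with `t* = 0` when `‖s‖₂ = 0`, by the convention `λ₂/0 = 0` giving the
factor `max(1 - λ₂/0, 0)` multiplied by `s = 0`). -/
theorem sparse_group_lasso_prox_composition
    (K : ℕ) (lam1 lam2 : ℝ) (hlam1 : 0 ≤ lam1) (hlam2 : 0 ≤ lam2)
    (x s tstar : EuclideanSpace ℝ (Fin K))
    (hs : ∀ k, s k = Real.sign (x k) * max (|x k| - lam1) 0)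
    (hts : ∀ k, tstar k = s k * max (1 - lam2 / ‖s‖) 0) :
    (∀ t : EuclideanSpace ℝ (Fin K),
        (1 / 2) * ‖tstar - x‖ ^ 2 + lam1 * ∑ k, |tstar k| + lam2 * ‖tstar‖
          ≤ (1 / 2) * ‖t - x‖ ^ 2 + lam1 * ∑ k, |t k| + lam2 * ‖t‖)
    ∧ ∀ t : EuclideanSpace ℝ (Fin K),
        (∀ u : EuclideanSpace ℝ (Fin K),
            (1 / 2) * ‖t - x‖ ^ 2 + lam1 * ∑ k, |t k| + lam2 * ‖t‖
              ≤ (1 / 2) * ‖u - x‖ ^ 2 + lam1 * ∑ k, |u k| + lam2 * ‖u‖) →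
        t = tstar := by
  set c := max (1 - lam2 / ‖s‖) 0
  have htstar : tstar = c • s := by ext k; simp [hts k, mul_comm]
  choose g hg1 hgs hxs using fun k => exists_subgradient_abs_softThreshold hlam1 (hs k)
  obtain ⟨h, hh1, hht, hsh⟩ := exists_subgradient_norm_groupShrink hlam2 htstar
  have hgt : ∀ k, g k * tstar k = |tstar k| := fun k => by
    rw [hts k, ← mul_assoc, hgs k, abs_mul, abs_of_nonneg (le_max_right _ _ : 0 ≤ c)]
  have hres : x - tstar = lam1 • WithLp.toLp 2 g + lam2 • h := by
    rw [← hsh]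
    ext k
    simp only [PiLp.sub_apply, PiLp.add_apply, PiLp.smul_apply, smul_eq_mul]
    linarith [hxs k]
  have hsub : IsSubgradient (fun u : EuclideanSpace ℝ (Fin K) =>
      lam1 * ∑ k, |u k| + lam2 * ‖u‖) tstar (x - tstar) := by
    rw [hres]
    exact (isSubgradient_sum_abs (g := WithLp.toLp 2 g) hg1 hgt).smul_add_smul
      (isSubgradient_norm hh1 hht) hlam1 hlam2
  simpa only [add_assoc] using hsub.prox_objective_unique_min
end

section
/- Let g be convex and differentiable with L-Lipschitz gradient, pen convex, and let θ^+ = prox_{α·pen}(θ - α∇g(θ)) with step size 0 < α ≤ 1/L. Then f(θ^+) ≤ f(θ) - (α/2)‖G_α(θ)‖^2, where f = g + pen and G_α(θ) = (θ - θ^+)/α is the generalized gradient; in particular the proximal gradient step does not increase f. -/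
/-!
The smooth part obeys the descent lemma
`g θ⁺ ≤ g θ + ⟪∇g θ, θ⁺ - θ⟫ + (L/2)‖θ⁺ - θ‖²`, obtained by comparing `t ↦ g (θ + t (θ⁺ - θ))`
with its quadratic majorant on `[0, 1]`. Minimality of `θ⁺` for the prox objective, combined with
convexity of `pen` along the segment from `θ⁺` to `θ`, gives the first-order condition
`pen θ⁺ ≤ pen θ + ⟪∇g θ, θ - θ⁺⟫ - ‖θ - θ⁺‖²/α`, i.e. `(θ - α ∇g θ - θ⁺)/α` is a subgradient of
`pen` at `θ⁺`. Adding the two, the inner products cancel, and `L ≤ 1/α` leaves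
`-‖θ - θ⁺‖²/(2α) = -(α/2)‖G_α θ‖²`.
-/

open Set Filter Topology RealInnerProductSpace

section FirstOrder

variable {E : Type*} [NormedAddCommGroup E] [NormedSpace ℝ E]

theorem le_add_fderiv_sub_add_sq_of_fderiv_lipschitz {f : E → ℝ} {f' : E → E →L[ℝ] ℝ}
    (hf : ∀ x, HasFDerivAt f (f' x) x) {L : ℝ} (hLip : ∀ u v, ‖f' u - f' v‖ ≤ L * ‖u - v‖)
    (x y : E) : f y ≤ f x + f' x (y - x) + L / 2 * ‖y - x‖ ^ 2 := by
  set d := y - x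
  have hline : ∀ t : ℝ, HasDerivAt (fun t : ℝ => x + t • d) d t := fun t => by
    simpa using ((hasDerivAt_id t).smul_const d).const_add x
  have hφ : ∀ t : ℝ, HasDerivAt (fun t : ℝ => f (x + t • d)) (f' (x + t • d) d) t :=
    fun t => (hf _).comp_hasDerivAt t (hline t)
  have hB : ∀ t : ℝ, HasDerivAt (fun t : ℝ => f x + t * f' x d + L / 2 * t ^ 2 * ‖d‖ ^ 2)
      (f' x d + L * t * ‖d‖ ^ 2) t := fun t =>
    ((((hasDerivAt_id' t).mul_const (f' x d)).const_add (f x)).fun_add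
      (((hasDerivAt_pow 2 t).const_mul (L / 2)).mul_const (‖d‖ ^ 2))).congr_deriv (by ring)
  have hbound : ∀ t ∈ Ico (0 : ℝ) 1, f' (x + t • d) d ≤ f' x d + L * t * ‖d‖ ^ 2 := by
    rintro t ⟨ht, -⟩
    have := hLip (x + t • d) x
    rw [add_sub_cancel_left, norm_smul, Real.norm_of_nonneg ht] at this
    calc f' (x + t • d) d = f' x d + (f' (x + t • d) - f' x) d := by simp
      _ ≤ f' x d + ‖f' (x + t • d) - f' x‖ * ‖d‖ := by
          gcongr; exact (le_abs_self _).trans ((f' (x + t • d) - f' x).le_opNorm d)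
      _ ≤ f' x d + L * t * ‖d‖ ^ 2 := by
          nlinarith [mul_le_mul_of_nonneg_right this (norm_nonneg d)]
  have := image_le_of_deriv_right_le_deriv_boundary
    (fun t _ => (hφ t).continuousAt.continuousWithinAt)
    (fun t _ => (hφ t).hasDerivWithinAt) (by simp)
    (fun t _ => (hB t).continuousAt.continuousWithinAt)
    (fun t _ => (hB t).hasDerivWithinAt) hbound (right_mem_Icc.2 zero_le_one)
  simpa [d] using this

theorem ConvexOn.le_add_fderiv_sub_of_isMinOn_add {p q : E → ℝ} {q' : E →L[ℝ] ℝ} {x : E}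
    (hp : ConvexOn ℝ univ p) (hq : HasFDerivAt q q' x) (hmin : IsMinOn (q + p) univ x)
    (u : E) : p x ≤ p u + q' (u - x) := by
  set w := u - x
  have hφ : HasDerivAt (fun t : ℝ => q (x + t • w)) (q' w) 0 := by
    refine hq.comp_hasDerivAt_of_eq 0 ?_ (by simp)
    simpa using ((hasDerivAt_id (0 : ℝ)).smul_const w).const_add x
  have hlim : Tendsto (fun t : ℝ => t⁻¹ * (q (x + t • w) - q x)) (𝓝[>] 0) (𝓝 (q' w)) := by
    simpa using hφ.tendsto_slope_zero_right
  have hslope : ∀ t ∈ Ioo (0 : ℝ) 1, p x - p u ≤ t⁻¹ * (q (x + t • w) - q x) := by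
    rintro t ⟨ht0, ht1⟩
    have hconv : p (x + t • w) ≤ (1 - t) * p x + t * p u := by
      have hseg : (1 - t) • x + t • u = x + t • w := by
        simp only [w, smul_sub, sub_smul, one_smul]; abel
      simpa only [hseg, smul_eq_mul] using
        hp.2 (mem_univ x) (mem_univ u) (show 0 ≤ 1 - t by linarith) ht0.le (by ring)
    have := isMinOn_univ_iff.1 hmin (x + t • w)
    simp only [Pi.add_apply] at this
    rw [le_inv_mul_iff₀ ht0]
    linarith
  linarith [ge_of_tendsto hlim (eventually_of_mem (Ioo_mem_nhdsGT one_pos) hslope)]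

end FirstOrder

theorem ConvexOn.le_add_inner_div_of_forall_prox_le {E : Type*} [NormedAddCommGroup E]
    [InnerProductSpace ℝ E] {p : E → ℝ} (hp : ConvexOn ℝ univ p) {α : ℝ} {v x : E}
    (hmin : ∀ u, 1 / (2 * α) * ‖x - v‖ ^ 2 + p x ≤ 1 / (2 * α) * ‖u - v‖ ^ 2 + p u) (u : E) :
    p x ≤ p u + ⟪x - v, u - x⟫ / α := by
  have := hp.le_add_fderiv_sub_of_isMinOn_add
    ((((hasFDerivAt_id x).sub_const v).norm_sq).const_mul (1 / (2 * α))) (isMinOn_univ_iff.2 hmin) u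
  simp only [smul_apply, ContinuousLinearMap.comp_apply, ContinuousLinearMap.coe_id', id,
    innerSL_apply_apply, smul_eq_mul, nsmul_eq_mul] at this
  calc _ ≤ _ := this
    _ = _ := by ring

theorem proximal_gradient_descent_lemma_general
    {d : ℕ} (g : EuclideanSpace ℝ (Fin d) → ℝ) (g' : EuclideanSpace ℝ (Fin d) → EuclideanSpace ℝ (Fin d))
    (pen : EuclideanSpace ℝ (Fin d) → ℝ)
    (hg' : ∀ x, HasGradientAt g (g' x) x)
    (L : ℝ)
    (hLip : ∀ u v, ‖g' u - g' v‖ ≤ L * ‖u - v‖)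
    (hpen : ConvexOn ℝ Set.univ pen)
    (α : ℝ) (hα : 0 < α) (hαL : α ≤ 1 / L)
    (θ θplus : EuclideanSpace ℝ (Fin d))
    (hprox : ∀ u, (1 / (2 * α)) * ‖θplus - (θ - α • g' θ)‖ ^ 2 + pen θplus
        ≤ (1 / (2 * α)) * ‖u - (θ - α • g' θ)‖ ^ 2 + pen u) :
    g θplus + pen θplus
      ≤ g θ + pen θ - (α / 2) * ‖(1 / α) • (θ - θplus)‖ ^ 2 := by
  have hpen_step : pen θplus ≤ pen θ + ⟪g' θ, θ - θplus⟫ - ‖θ - θplus‖ ^ 2 / α := by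
    have hinner : ⟪θplus - (θ - α • g' θ), θ - θplus⟫ = α * ⟪g' θ, θ - θplus⟫ - ‖θ - θplus‖ ^ 2 := by
      rw [show θplus - (θ - α • g' θ) = α • g' θ - (θ - θplus) by abel, inner_sub_left,
        real_inner_smul_left, real_inner_self_eq_norm_sq]
    calc pen θplus ≤ pen θ + ⟪θplus - (θ - α • g' θ), θ - θplus⟫ / α :=
          hpen.le_add_inner_div_of_forall_prox_le hprox θ
      _ = _ := by rw [hinner]; field_simp; ring
  have hg_step : g θplus ≤ g θ - ⟪g' θ, θ - θplus⟫ + L / 2 * ‖θ - θplus‖ ^ 2 := by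
    have := le_add_fderiv_sub_add_sq_of_fderiv_lipschitz (fun x => (hg' x).hasFDerivAt)
      (fun u v => by simpa [← map_sub] using hLip u v) θ θplus
    rwa [InnerProductSpace.toDual_apply_apply, ← neg_sub, inner_neg_right, norm_neg,
      ← sub_eq_add_neg] at this
  have hLα : L ≤ 1 / α := by
    rcases le_or_gt L 0 with hL | hL
    · exact hL.trans (by positivity)
    · exact (le_one_div hα hL).1 hαL
  have hquad : L / 2 * ‖θ - θplus‖ ^ 2 ≤ ‖θ - θplus‖ ^ 2 / α / 2 := by
    calc L / 2 * ‖θ - θplus‖ ^ 2 ≤ 1 / α / 2 * ‖θ - θplus‖ ^ 2 := by gcongr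
      _ = ‖θ - θplus‖ ^ 2 / α / 2 := by ring
  have hG : (α / 2) * ‖(1 / α) • (θ - θplus)‖ ^ 2 = ‖θ - θplus‖ ^ 2 / α / 2 := by
    rw [norm_smul, mul_pow, Real.norm_of_nonneg (by positivity)]
    field_simp
  linarith

/-- Proximal gradient descent lemma: with `g` convex differentiable with `L`-Lipschitz
gradient `g'`, `pen` convex, step size `0 < α ≤ 1/L`, and
`θ⁺ = prox_{α·pen}(θ - α∇g(θ))` (characterized as the minimizer of the prox objective),
the objective `f = g + pen` satisfies `f(θ⁺) ≤ f(θ) - (α/2)‖G_α(θ)‖²` where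
`G_α(θ) = (θ - θ⁺)/α` is the generalized gradient; in particular the step does not
increase `f`. -/
theorem proximal_gradient_descent_lemma
    {d : ℕ} (g : EuclideanSpace ℝ (Fin d) → ℝ) (g' : EuclideanSpace ℝ (Fin d) → EuclideanSpace ℝ (Fin d))
    (pen : EuclideanSpace ℝ (Fin d) → ℝ)
    (hg : ConvexOn ℝ Set.univ g)
    (hg' : ∀ x, HasGradientAt g (g' x) x)
    (L : ℝ) (hL : 0 < L)
    (hLip : ∀ u v, ‖g' u - g' v‖ ≤ L * ‖u - v‖)
    (hpen : ConvexOn ℝ Set.univ pen)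
    (α : ℝ) (hα : 0 < α) (hαL : α ≤ 1 / L)
    (θ θplus : EuclideanSpace ℝ (Fin d))
    (hprox : ∀ u, (1 / (2 * α)) * ‖θplus - (θ - α • g' θ)‖ ^ 2 + pen θplus
        ≤ (1 / (2 * α)) * ‖u - (θ - α • g' θ)‖ ^ 2 + pen u) :
    g θplus + pen θplus
      ≤ g θ + pen θ - (α / 2) * ‖(1 / α) • (θ - θplus)‖ ^ 2 :=
  proximal_gradient_descent_lemma_general g g' pen hg' L hLip hpen α hα hαL θ θplus hprox
end
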